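/- Let A be a finite algebra with a minimal nontrivial congruence μ (an atom with ⊥ ≺ μ), and let U be a (⊥, μ)-minimal set. Then the group Π(A, U) of polynomial permutations of U acts transitively on the set of (⊥, μ)-traces contained in U, moreover this action is by polynomial isomorphisms; the action of Π(A, U) on the body of U has at most two orbits; and if some element of Π(A, U) moves some element of some trace nontrivially within that trace, then Π(A, U) acts transitively on the body of U. -/

import Mathlib

/-!
For a nontrivial pair `a ≠ b` in the atom `μ` we have `μ = Cg(a, b)`, so any two `μ`-related
elements are joined by a Mal'cev chain of polynomial images of `{a, b}`. If `u ≠ t` lie in a trace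
of `U = e(A)`, the last step of a chain from `u` to `t` that `e` does not collapse yields a
polynomial `e ∘ q` sending `a` or `b` to `t` without collapsing `{a, b}`; by minimality of `U` such
a polynomial permutes `U`. So every element of the body is reached from `a` or from `b` under
`Π(A, U)`. Taking `a, b` in one trace gives the transitivity on traces and the two orbits; taking
`b = p a` for a `p` that moves `a` inside its trace gives a single orbit.
-/

/-- A purely functional first-order signature. -/
structure Signature where
  ops : Type
  arity : ops → ℕ

/-- An algebra for a signature: an interpretation of each operation symbol. -/
structure UAlg (σ : Signature) (A : Type) where
  interp : ∀ o : σ.ops, (Fin (σ.arity o) → A) → A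

/-- Terms in `n` variables over a signature. -/
inductive Term (σ : Signature) (n : ℕ) : Type
  | var : Fin n → Term σ n
  | op : (o : σ.ops) → (Fin (σ.arity o) → Term σ n) → Term σ n

/-- Evaluation of a term at a tuple. -/
def Term.eval {σ : Signature} {A : Type} (Alg : UAlg σ A) {n : ℕ} :
    Term σ n → (Fin n → A) → A
  | .var i, v => v i
  | .op o ts, v => Alg.interp o fun j => (ts j).eval Alg v

/-- A congruence: an equivalence relation compatible with all operations. -/
def IsCongruence {σ : Signature} {A : Type} (Alg : UAlg σ A) (r : A → A → Prop) : Prop :=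
  Equivalence r ∧ ∀ (o : σ.ops) (x y : Fin (σ.arity o) → A),
    (∀ i, r (x i) (y i)) → r (Alg.interp o x) (Alg.interp o y)

/-- A `k`-ary polynomial operation: a term operation with parameters. -/
def IsPolynomial {σ : Signature} {A : Type} (Alg : UAlg σ A) {k : ℕ}
    (f : (Fin k → A) → A) : Prop :=
  ∃ (n : ℕ) (t : Term σ (k + n)) (params : Fin n → A),
    ∀ x : Fin k → A, f x = t.eval Alg (Fin.append x params)

/-- A unary polynomial operation. -/
def IsUnaryPolynomial {σ : Signature} {A : Type} (Alg : UAlg σ A) (f : A → A) : Prop :=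
  IsPolynomial Alg (k := 1) fun x => f (x 0)

/-- The term condition TermCond(α, β; γ). -/
def TermCond {σ : Signature} {A : Type} (Alg : UAlg σ A) (α β γ : A → A → Prop) : Prop :=
  ∀ (n m : ℕ) (t : Term σ (n + m)) (a₁ a₂ : Fin n → A) (b₁ b₂ : Fin m → A),
    (∀ i, α (a₁ i) (a₂ i)) → (∀ i, β (b₁ i) (b₂ i)) →
    γ (t.eval Alg (Fin.append a₁ b₁)) (t.eval Alg (Fin.append a₁ b₂)) →
    γ (t.eval Alg (Fin.append a₂ b₁)) (t.eval Alg (Fin.append a₂ b₂))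

/-- β is strongly abelian over γ. -/
def StronglyAbelianOver {σ : Signature} {A : Type} (Alg : UAlg σ A)
    (β γ : A → A → Prop) : Prop :=
  ∀ (n m : ℕ) (t : Term σ (n + m)) (a₁ a₂ : Fin n → A) (b₁ b₂ b₃ : Fin m → A),
    (∀ i, β (a₁ i) (a₂ i)) → (∀ i, β (b₁ i) (b₂ i)) → (∀ i, β (b₂ i) (b₃ i)) →
    γ (t.eval Alg (Fin.append a₁ b₁)) (t.eval Alg (Fin.append a₂ b₂)) →
    γ (t.eval Alg (Fin.append a₁ b₃)) (t.eval Alg (Fin.append a₂ b₃))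

/-- The least congruence containing a binary relation. -/
def congClosure {σ : Signature} {A : Type} (Alg : UAlg σ A) (R : A → A → Prop) :
    A → A → Prop :=
  fun a b => ∀ r, IsCongruence Alg r → (∀ x y, R x y → r x y) → r a b

/-- A subset closed under the operations. -/
def IsSubalgebra {σ : Signature} {A : Type} (Alg : UAlg σ A) (s : Set A) : Prop :=
  ∀ (o : σ.ops) (x : Fin (σ.arity o) → A), (∀ j, x j ∈ s) → Alg.interp o x ∈ s

/-- The power algebra `A^I`. -/
def UAlg.pow {σ : Signature} {A : Type} (Alg : UAlg σ A) (I : Type) :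
    UAlg σ (I → A) :=
  ⟨fun o x i => Alg.interp o fun j => x j i⟩

/-- The product of a family of algebras. -/
def UAlg.pi {σ : Signature} {ι : Type} {A : ι → Type} (Alg : ∀ i, UAlg σ (A i)) :
    UAlg σ (∀ i, A i) :=
  ⟨fun o x i => (Alg i).interp o fun j => x j i⟩

/-- The binary product of two algebras. -/
def UAlg.prod2 {σ : Signature} {A B : Type} (AlgA : UAlg σ A) (AlgB : UAlg σ B) :
    UAlg σ (A × B) :=
  ⟨fun o x => (AlgA.interp o fun j => (x j).1, AlgB.interp o fun j => (x j).2)⟩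

/-- The algebra structure on a subalgebra. -/
def UAlg.sub {σ : Signature} {A : Type} (Alg : UAlg σ A) (s : Set A)
    (hs : IsSubalgebra Alg s) : UAlg σ s :=
  ⟨fun o x => ⟨Alg.interp o fun j => (x j : A), hs o _ fun j => (x j).2⟩⟩

/-- Homomorphisms of algebras. -/
def IsHom {σ : Signature} {A B : Type} (AlgA : UAlg σ A) (AlgB : UAlg σ B)
    (f : A → B) : Prop :=
  ∀ (o : σ.ops) (x : Fin (σ.arity o) → A), f (AlgA.interp o x) = AlgB.interp o (f ∘ x)

/-- An idempotent unary polynomial. -/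
def IsIdempotentPoly {σ : Signature} {A : Type} (Alg : UAlg σ A) (e : A → A) : Prop :=
  IsUnaryPolynomial Alg e ∧ ∀ x, e (e x) = e x

/-- A (⊥, δ)-minimal set. -/
def IsMinimalSet {σ : Signature} {A : Type} (Alg : UAlg σ A) (δ : A → A → Prop)
    (U : Set A) : Prop :=
  (∃ e, IsIdempotentPoly Alg e ∧ U = Set.range e ∧ ∃ a b, δ a b ∧ e a ≠ e b) ∧
  ∀ e', IsIdempotentPoly Alg e' → Set.range e' ⊆ U → (∃ a b, δ a b ∧ e' a ≠ e' b) →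
    Set.range e' = U

/-- μ is an atom of the congruence lattice. -/
def IsAtomCong {σ : Signature} {A : Type} (Alg : UAlg σ A) (μ : A → A → Prop) : Prop :=
  IsCongruence Alg μ ∧ μ ≠ (fun a b => a = b) ∧
  ∀ θ, IsCongruence Alg θ → (∀ a b, θ a b → μ a b) → θ = (fun a b => a = b) ∨ θ = μ

/-- A (⊥, μ)-trace in a minimal set U. -/
def IsTrace {A : Type} (μ : A → A → Prop) (U N : Set A) : Prop :=
  (∃ a ∈ U, N = {x ∈ U | μ x a}) ∧ ∃ x ∈ N, ∃ y ∈ N, x ≠ y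

/-- The body of a minimal set: the union of its traces. -/
def Body {A : Type} (μ : A → A → Prop) (U : Set A) : Set A :=
  {x | ∃ N, IsTrace μ U N ∧ x ∈ N}

/-- Polynomial permutations of U (as functions A → A which are bijective on U). -/
def PolPermFun {σ : Signature} {A : Type} (Alg : UAlg σ A) (U : Set A) : Set (A → A) :=
  { p | IsUnaryPolynomial Alg p ∧ Set.BijOn p U U }

/-- Subdirect irreducibility: there is a pair contained in every nontrivial congruence. -/
def IsSI {σ : Signature} {B : Type} (Alg : UAlg σ B) : Prop :=
  ∃ a b : B, a ≠ b ∧ ∀ θ, IsCongruence Alg θ → θ ≠ (fun x y => x = y) → θ a b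

/-- The subalgebra generated by a set. -/
def genSub {σ : Signature} {B : Type} (Alg : UAlg σ B) (s : Set B) : Set B :=
  ⋂₀ {t | IsSubalgebra Alg t ∧ s ⊆ t}

/-- A strongly solvable congruence: connected to ⊥ by strongly abelian covers. -/
def IsStronglySolvable {σ : Signature} {A : Type} (Alg : UAlg σ A)
    (s : A → A → Prop) : Prop :=
  ∃ (n : ℕ) (c : Fin (n + 1) → (A → A → Prop)),
    c 0 = (fun a b => a = b) ∧ c (Fin.last n) = s ∧
    (∀ i, IsCongruence Alg (c i)) ∧
    ∀ i : Fin n, (∀ a b, c i.castSucc a b → c i.succ a b) ∧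
      StronglyAbelianOver Alg (c i.succ) (c i.castSucc)

/-- The set of n-ary term operations of an algebra. -/
def TermFun {σ : Signature} {A : Type} (Alg : UAlg σ A) (n : ℕ) :
    Set ((Fin n → A) → A) :=
  { g | ∃ t : Term σ n, g = fun v => t.eval Alg v }

namespace Term

variable {σ : Signature} {A : Type}

def rename {n k : ℕ} (ρ : Fin n → Fin k) : Term σ n → Term σ k
  | .var i => .var (ρ i)
  | .op o ts => .op o fun j => (ts j).rename ρ

theorem eval_rename (Alg : UAlg σ A) {n k : ℕ} (ρ : Fin n → Fin k) (t : Term σ n)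
    (v : Fin k → A) : (t.rename ρ).eval Alg v = t.eval Alg (v ∘ ρ) := by
  induction t with
  | var i => rfl
  | op o ts ih => simp only [rename, eval, ih]

def subst {n k : ℕ} (g : Fin n → Term σ k) : Term σ n → Term σ k
  | .var i => g i
  | .op o ts => .op o fun j => (ts j).subst g

theorem eval_subst (Alg : UAlg σ A) {n k : ℕ} (g : Fin n → Term σ k) (t : Term σ n)
    (v : Fin k → A) : (t.subst g).eval Alg v = t.eval Alg fun i => (g i).eval Alg v := by
  induction t with
  | var i => rfl
  | op o ts ih => simp only [subst, eval, ih]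

end Term

section UnaryPolynomial

variable {σ : Signature} {A : Type} {Alg : UAlg σ A}

theorem isUnaryPolynomial_iff {f : A → A} :
    IsUnaryPolynomial Alg f ↔ ∃ (n : ℕ) (t : Term σ (1 + n)) (params : Fin n → A),
      ∀ a, f a = t.eval Alg (Fin.append (fun _ => a) params) := by
  refine ⟨fun ⟨n, t, params, h⟩ => ⟨n, t, params, fun a => h fun _ => a⟩,
    fun ⟨n, t, params, h⟩ => ⟨n, t, params, fun x => ?_⟩⟩
  show f (x 0) = _
  rw [h (x 0), show (fun _ : Fin 1 => x 0) = x from funext fun i => by rw [Subsingleton.elim i 0]]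

theorem isUnaryPolynomial_id : IsUnaryPolynomial Alg fun a => a :=
  isUnaryPolynomial_iff.2 ⟨0, .var (Fin.castAdd 0 0), Fin.elim0, fun a => by simp [Term.eval]⟩

namespace IsUnaryPolynomial

theorem comp {f g : A → A} (hg : IsUnaryPolynomial Alg g) (hf : IsUnaryPolynomial Alg f) :
    IsUnaryPolynomial Alg (g ∘ f) := by
  obtain ⟨n, t, p, hf⟩ := isUnaryPolynomial_iff.1 hf
  obtain ⟨m, s, q, hg⟩ := isUnaryPolynomial_iff.1 hg
  -- the parameters of `t` take the first `n` slots, those of `s` the last `m`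
  let ρ : Fin (1 + n) → Fin (1 + (n + m)) :=
    Fin.append (fun _ => Fin.castAdd (n + m) 0) fun j => Fin.natAdd 1 (Fin.castAdd m j)
  let G : Fin (1 + m) → Term σ (1 + (n + m)) :=
    Fin.append (fun _ => t.rename ρ) fun i => .var (Fin.natAdd 1 (Fin.natAdd n i))
  refine isUnaryPolynomial_iff.2 ⟨n + m, s.subst G, Fin.append p q, fun a => ?_⟩
  rw [Term.eval_subst, Function.comp_apply, hg]
  congr 1
  funext i
  refine Fin.addCases (fun _ => ?_) (fun i => ?_) i
  · simp only [G, Fin.append_left, Term.eval_rename, hf]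
    congr 1
    funext j
    refine Fin.addCases (fun _ => ?_) (fun j => ?_) j <;> simp [ρ, Fin.append_left, Fin.append_right]
  · simp [G, Term.eval, Fin.append_right]

theorem iterate {f : A → A} (hf : IsUnaryPolynomial Alg f) (n : ℕ) :
    IsUnaryPolynomial Alg f^[n] := by
  induction n with
  | zero => exact isUnaryPolynomial_id
  | succ n ih => rw [Function.iterate_succ']; exact hf.comp ih

theorem interp_update (o : σ.ops) (x : Fin (σ.arity o) → A) (i : Fin (σ.arity o)) :
    IsUnaryPolynomial Alg fun c => Alg.interp o (Function.update x i c) := by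
  refine isUnaryPolynomial_iff.2 ⟨σ.arity o,
    .op o fun j => if j = i then .var (Fin.castAdd _ 0) else .var (Fin.natAdd 1 j), x, fun c => ?_⟩
  simp only [Term.eval]
  congr 1
  funext j
  by_cases h : j = i
  · subst h; simp [Term.eval]
  · simp [Term.eval, h, Fin.append_right]

end IsUnaryPolynomial

theorem IsCongruence.eval {r : A → A → Prop} (hr : IsCongruence Alg r) {n : ℕ} (t : Term σ n)
    {v w : Fin n → A} (h : ∀ i, r (v i) (w i)) : r (t.eval Alg v) (t.eval Alg w) := by
  induction t with
  | var i => exact h i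
  | op o ts ih => exact hr.2 o _ _ ih

theorem IsCongruence.map_unary {r : A → A → Prop} (hr : IsCongruence Alg r) {f : A → A}
    (hf : IsUnaryPolynomial Alg f) {a b : A} (hab : r a b) : r (f a) (f b) := by
  obtain ⟨n, t, p, hf⟩ := isUnaryPolynomial_iff.1 hf
  rw [hf, hf]
  refine hr.eval t fun i => Fin.addCases (fun _ => ?_) (fun j => ?_) i
  · simpa using hab
  · simpa using hr.1.refl (p j)

end UnaryPolynomial

section Malcev

variable {σ : Signature} {A : Type} {Alg : UAlg σ A}

/-- A step of a Mal'cev chain for the pair `(a, b)`. -/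
def PolyLink (Alg : UAlg σ A) (a b u v : A) : Prop :=
  ∃ p, IsUnaryPolynomial Alg p ∧ (u = p a ∧ v = p b ∨ u = p b ∧ v = p a)

instance {a b : A} : Std.Symm (PolyLink Alg a b) where
  symm _ _ := fun ⟨p, hp, h⟩ => ⟨p, hp, h.symm.imp And.symm And.symm⟩

theorem interp_rel_of_map_unary {R : A → A → Prop} (hrefl : ∀ a, R a a)
    (htrans : ∀ {a b c}, R a b → R b c → R a c)
    (hmap : ∀ p, IsUnaryPolynomial Alg p → ∀ {u v}, R u v → R (p u) (p v))
    (o : σ.ops) {x y : Fin (σ.arity o) → A} (h : ∀ i, R (x i) (y i)) :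
    R (Alg.interp o x) (Alg.interp o y) := by
  classical
  suffices ∀ s : Finset (Fin (σ.arity o)), R (Alg.interp o x) (Alg.interp o (s.piecewise y x)) by
    simpa using this Finset.univ
  intro s
  induction s using Finset.induction_on with
  | empty => simpa using hrefl _
  | insert i s hi ih =>
    rw [Finset.piecewise_insert]
    refine htrans ih ?_
    have hxi : s.piecewise y x = Function.update (s.piecewise y x) i (x i) := by
      simp [Finset.piecewise_eq_of_notMem _ _ _ hi]
    conv_lhs => rw [hxi]
    exact hmap _ (IsUnaryPolynomial.interp_update o _ i) (h i)

theorem isCongruence_reflTransGen_polyLink (a b : A) :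
    IsCongruence Alg (Relation.ReflTransGen (PolyLink Alg a b)) := by
  refine ⟨⟨fun _ => .refl, Std.Symm.symm _ _, .trans⟩,
    fun o _ _ => interp_rel_of_map_unary (fun _ => .refl) .trans (fun P hP {_ _} h => ?_) o⟩
  refine Relation.ReflTransGen.lift P (fun u v ⟨p, hp, huv⟩ => ?_) _ _ h
  exact ⟨P ∘ p, hP.comp hp, huv.imp (And.imp (congrArg P) (congrArg P))
    (And.imp (congrArg P) (congrArg P))⟩

theorem reflTransGen_polyLink_of_congClosure {a b c d : A}
    (h : congClosure Alg (fun u v => u = a ∧ v = b) c d) :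
    Relation.ReflTransGen (PolyLink Alg a b) c d := by
  refine h _ (isCongruence_reflTransGen_polyLink a b) ?_
  rintro _ _ ⟨rfl, rfl⟩
  exact .single ⟨_, isUnaryPolynomial_id, .inl ⟨rfl, rfl⟩⟩

theorem isCongruence_congClosure (R : A → A → Prop) : IsCongruence Alg (congClosure Alg R) :=
  ⟨⟨fun a _ hr _ => hr.1.refl a, fun h r hr hR => hr.1.symm (h r hr hR),
    fun h h' r hr hR => hr.1.trans (h r hr hR) (h' r hr hR)⟩,
    fun o _ _ h r hr hR => hr.2 o _ _ fun i => h i r hr hR⟩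

theorem IsAtomCong.congClosure_eq {μ : A → A → Prop} (hμ : IsAtomCong Alg μ) {a b : A}
    (hab : μ a b) (hne : a ≠ b) : congClosure Alg (fun u v => u = a ∧ v = b) = μ := by
  have hab' : congClosure Alg (fun u v => u = a ∧ v = b) a b := fun _ _ hR => hR a b ⟨rfl, rfl⟩
  refine (hμ.2.2 _ (isCongruence_congClosure _) fun c d h => h μ hμ.1 ?_).resolve_left ?_
  · rintro _ _ ⟨rfl, rfl⟩; exact hab
  · intro h; rw [h] at hab'; exact hne hab'

theorem Relation.ReflTransGen.exists_last_separated {r : A → A → Prop} (φ : A → A) {c d : A}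
    (h : Relation.ReflTransGen r c d) (hφ : φ c ≠ φ d) :
    ∃ u v, r u v ∧ φ u ≠ φ v ∧ φ v = φ d := by
  induction h with
  | refl => exact absurd rfl hφ
  | @tail w d _ hwd ih =>
    by_cases hw : φ w = φ d
    · obtain ⟨u, v, huv, hφuv, hv⟩ := ih (hw ▸ hφ)
      exact ⟨u, v, huv, hφuv, hv.trans hw⟩
    · exact ⟨w, d, hwd, hw, rfl⟩

theorem IsAtomCong.exists_poly_separated {μ : A → A → Prop} (hμ : IsAtomCong Alg μ)
    {a b c d : A} (hab : μ a b) (hne : a ≠ b) (hcd : μ c d) (φ : A → A) (hφ : φ c ≠ φ d) :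
    ∃ q, IsUnaryPolynomial Alg q ∧ φ (q a) ≠ φ (q b) ∧ (φ (q a) = φ d ∨ φ (q b) = φ d) := by
  have hchain := reflTransGen_polyLink_of_congClosure ((hμ.congClosure_eq hab hne).symm ▸ hcd)
  obtain ⟨u, v, ⟨q, hq, ⟨rfl, rfl⟩ | ⟨rfl, rfl⟩⟩, hφuv, hv⟩ := hchain.exists_last_separated φ hφ
  · exact ⟨q, hq, hφuv, .inr hv⟩
  · exact ⟨q, hq, hφuv.symm, .inl hv⟩

end Malcev

theorem Function.exists_iterate_succ_idempotent {A : Type} [Finite A] (f : A → A) :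
    ∃ n, ∀ z, f^[n + 1] (f^[n + 1] z) = f^[n + 1] z := by
  obtain ⟨i, j, hij, heq⟩ := Finite.exists_ne_map_eq_of_infinite fun k : ℕ => f^[k]
  wlog hlt : i < j generalizing i j
  · exact this j i hij.symm heq.symm (by omega)
  -- every `f^[i] z` has period `j - i`; so has `f^[m] z` for `m ≥ i`, and `m` can be a period
  have hper : ∀ z, Function.IsPeriodicPt f (j - i) (f^[i] z) := fun z => by
    rw [Function.IsPeriodicPt, Function.IsFixedPt, ← Function.iterate_add_apply,
      Nat.sub_add_cancel hlt.le, heq]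
  have hm : i + 1 ≤ (i + 1) * (j - i) := Nat.le_mul_of_pos_right _ (by omega)
  refine ⟨(i + 1) * (j - i) - 1, fun z => ?_⟩
  rw [Nat.sub_add_cancel (by omega)]
  have hz : f^[(i + 1) * (j - i)] z = f^[(i + 1) * (j - i) - i] (f^[i] z) := by
    rw [← Function.iterate_add_apply, Nat.sub_add_cancel (by omega)]
  rw [hz]
  exact (((hper z).apply_iterate _).const_mul (i + 1)).eq

section MinimalSet

variable {σ : Signature} {A : Type} {Alg : UAlg σ A} {μ : A → A → Prop} {U : Set A}

theorem IsIdempotentPoly.apply_of_mem_range {e : A → A} (he : IsIdempotentPoly Alg e) {z : A}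
    (hz : z ∈ Set.range e) : e z = z := by
  obtain ⟨y, rfl⟩ := hz
  exact he.2 y

theorem IsMinimalSet.exists_rel_ne (hU : IsMinimalSet Alg μ U) (hμ : IsCongruence Alg μ) :
    ∃ x ∈ U, ∃ y ∈ U, μ x y ∧ x ≠ y := by
  obtain ⟨⟨e, he, rfl, a, b, hab, hne⟩, -⟩ := hU
  exact ⟨e a, ⟨a, rfl⟩, e b, ⟨b, rfl⟩, hμ.map_unary he.1 hab, hne⟩

/-- Among the polynomials with range in `f '' U` that separate a `μ`-pair take one, `t`, of
smallest range. Then some `t ∘ q` permutes `range t`, and an idempotent power of it is separating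
with range in `range t`, so by minimality `U ⊆ range t ⊆ f '' U`. -/
theorem IsMinimalSet.bijOn_of_map_ne [Finite A] (hμ : IsAtomCong Alg μ)
    (hU : IsMinimalSet Alg μ U) {f : A → A} (hf : IsUnaryPolynomial Alg f)
    (hfU : Set.MapsTo f U U) {x y : A} (hx : x ∈ U) (hy : y ∈ U) (hxy : μ x y)
    (hne : f x ≠ f y) : Set.BijOn f U U := by
  obtain ⟨⟨e, he, rfl, -⟩, hmin⟩ := hU
  let S : Set (A → A) := {t | IsUnaryPolynomial Alg t ∧ Set.range t ⊆ f '' Set.range e ∧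
    ∃ a b, μ a b ∧ t a ≠ t b}
  have hfe : f ∘ e ∈ S := ⟨hf.comp he.1, (Set.range_comp f e).subset,
    x, y, hxy, by simpa [he.apply_of_mem_range hx, he.apply_of_mem_range hy] using hne⟩
  obtain ⟨t, ⟨ht, htf, a, b, hab, htab⟩, htmin⟩ :=
    S.exists_min_image (fun t => (Set.range t).ncard) S.toFinite ⟨_, hfe⟩
  obtain ⟨q, hq, hsep, -⟩ := hμ.exists_poly_separated (hμ.1.map_unary ht hab) htab hab t htab
  have hmaps : Set.MapsTo (t ∘ q) (Set.range t) (Set.range t) := fun _ _ => ⟨_, rfl⟩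
  have hbij : Set.BijOn (t ∘ q) (Set.range t) (Set.range t) := by
    refine ((Set.range t).toFinite.surjOn_iff_bijOn_of_mapsTo hmaps).1 ?_
    have hsub : Set.range (t ∘ q ∘ t) ⊆ Set.range t := Set.range_comp_subset_range _ _
    have hmem : t ∘ q ∘ t ∈ S := ⟨(ht.comp hq).comp ht, hsub.trans htf, a, b, hab, hsep⟩
    rw [Set.SurjOn, ← Set.range_comp]
    exact (Set.eq_of_subset_of_ncard_le hsub (htmin _ hmem)).symm.subset
  obtain ⟨n, hn⟩ := Function.exists_iterate_succ_idempotent (t ∘ q)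
  have hrange : Set.range (t ∘ q)^[n + 1] ⊆ Set.range t := by
    rw [Function.iterate_succ']
    exact (Set.range_comp_subset_range _ _).trans (Set.range_comp_subset_range _ _)
  have hrange_eq : Set.range (t ∘ q)^[n + 1] = Set.range e := by
    refine hmin _ ⟨(ht.comp hq).iterate _, hn⟩ (hrange.trans (htf.trans ?_)) ⟨t a, t b,
      hμ.1.map_unary ht hab, ((hbij.iterate _).injOn.ne ⟨a, rfl⟩ ⟨b, rfl⟩ htab)⟩
    exact hfU.image_subset
  exact ((Set.range e).toFinite.surjOn_iff_bijOn_of_mapsTo hfU).1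
    (hrange_eq.symm.subset.trans (hrange.trans htf))

end MinimalSet

section PolPerm

variable {σ : Signature} {A : Type} {Alg : UAlg σ A} {U : Set A}

theorem comp_mem_polPermFun {p q : A → A} (hq : q ∈ PolPermFun Alg U)
    (hp : p ∈ PolPermFun Alg U) : q ∘ p ∈ PolPermFun Alg U :=
  ⟨hq.1.comp hp.1, hq.2.comp hp.2⟩

theorem exists_inverse_mem_polPermFun [Finite A] {p : A → A} (hp : p ∈ PolPermFun Alg U) :
    ∃ q ∈ PolPermFun Alg U, ∀ u ∈ U, q (p u) = u ∧ p (q u) = u := by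
  obtain ⟨n, hn⟩ := Function.exists_iterate_succ_idempotent p
  have hid : ∀ u ∈ U, p^[n + 1] u = u := fun u hu =>
    (hp.2.iterate _).injOn ((hp.2.iterate _).mapsTo hu) hu (hn u)
  refine ⟨p^[n], ⟨hp.1.iterate n, hp.2.iterate n⟩, fun u hu => ⟨?_, ?_⟩⟩
  · rw [← Function.iterate_succ_apply, hid u hu]
  · rw [← Function.iterate_succ_apply' p, hid u hu]

theorem exists_polPermFun_of_forall_apply_eq [Finite A] {B : Set A} {x : A} (hx : x ∈ U)
    (h : ∀ c ∈ B, ∃ r ∈ PolPermFun Alg U, r x = c) :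
    ∀ a ∈ B, ∀ b ∈ B, ∃ p ∈ PolPermFun Alg U, p a = b := by
  intro a ha b hb
  obtain ⟨ra, hra, rfl⟩ := h a ha
  obtain ⟨rb, hrb, rfl⟩ := h b hb
  obtain ⟨q, hq, hqra⟩ := exists_inverse_mem_polPermFun hra
  exact ⟨rb ∘ q, comp_mem_polPermFun hrb hq, by simp [(hqra x hx).1]⟩

end PolPerm

section Trace

variable {σ : Signature} {A : Type} {Alg : UAlg σ A} {μ : A → A → Prop} {U N N₁ N₂ : Set A}

theorem IsTrace.subset (hN : IsTrace μ U N) : N ⊆ U := by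
  obtain ⟨⟨a, -, rfl⟩, -⟩ := hN
  exact fun _ hz => hz.1

theorem IsTrace.mem_iff (hμ : Equivalence μ) (hN : IsTrace μ U N) {z w : A} (hz : z ∈ N) :
    w ∈ N ↔ w ∈ U ∧ μ w z := by
  obtain ⟨⟨a, -, rfl⟩, -⟩ := hN
  exact ⟨fun hw => ⟨hw.1, hμ.trans hw.2 (hμ.symm hz.2)⟩, fun hw => ⟨hw.1, hμ.trans hw.2 hz.2⟩⟩

theorem IsTrace.exists_ne (hN : IsTrace μ U N) (z : A) : ∃ w ∈ N, w ≠ z := by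
  obtain ⟨-, x, hx, y, hy, hxy⟩ := hN
  by_cases hxz : x = z
  · exact ⟨y, hy, hxz ▸ hxy.symm⟩
  · exact ⟨x, hx, hxz⟩

theorem mem_body_of_rel (hμ : Equivalence μ) {x y : A} (hx : x ∈ U) (hy : y ∈ U) (hxy : μ x y)
    (hne : x ≠ y) : x ∈ Body μ U :=
  ⟨{z ∈ U | μ z x}, ⟨⟨x, hx, rfl⟩, x, ⟨hx, hμ.refl x⟩, y, ⟨hy, hμ.symm hxy⟩, hne⟩,
    hx, hμ.refl x⟩

theorem IsTrace.image_eq_of_apply_mem [Finite A] (hμ : IsCongruence Alg μ) {p : A → A}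
    (hp : p ∈ PolPermFun Alg U) (hN₁ : IsTrace μ U N₁) (hN₂ : IsTrace μ U N₂) {z : A}
    (hz : z ∈ N₁) (hpz : p z ∈ N₂) : p '' N₁ = N₂ := by
  obtain ⟨q, hq, hpq⟩ := exists_inverse_mem_polPermFun hp
  ext v
  constructor
  · rintro ⟨w, hw, rfl⟩
    have hw := (hN₁.mem_iff hμ.1 hz).1 hw
    exact (hN₂.mem_iff hμ.1 hpz).2 ⟨hp.2.mapsTo hw.1, hμ.map_unary hp.1 hw.2⟩
  · intro hv
    have hv := (hN₂.mem_iff hμ.1 hpz).1 hv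
    have hqv : μ (q v) z := (hpq z (hN₁.subset hz)).1 ▸ hμ.map_unary hq.1 hv.2
    exact ⟨q v, (hN₁.mem_iff hμ.1 hz).2 ⟨hq.2.mapsTo hv.1, hqv⟩, (hpq v hv.1).2⟩

end Trace

section Orbits

variable {σ : Signature} {A : Type} [Finite A] {Alg : UAlg σ A} {μ : A → A → Prop} {U : Set A}

theorem IsMinimalSet.exists_polPermFun_apply_eq (hμ : IsAtomCong Alg μ)
    (hU : IsMinimalSet Alg μ U) {a b u t : A} (ha : a ∈ U) (hb : b ∈ U) (hab : μ a b)
    (hne : a ≠ b) (hu : u ∈ U) (ht : t ∈ U) (hut : μ u t) (hne' : u ≠ t) :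
    ∃ s ∈ PolPermFun Alg U, s a = t ∨ s b = t := by
  obtain ⟨⟨e, he, rfl, -⟩, -⟩ := id hU
  obtain ⟨q, hq, hsep, hlast⟩ := hμ.exists_poly_separated hab hne hut e
    (by rwa [he.apply_of_mem_range hu, he.apply_of_mem_range ht])
  rw [he.apply_of_mem_range ht] at hlast
  exact ⟨e ∘ q, ⟨he.1.comp hq,
    hU.bijOn_of_map_ne hμ (he.1.comp hq) (fun _ _ => ⟨_, rfl⟩) ha hb hab hsep⟩, hlast⟩

theorem IsMinimalSet.exists_polPermFun_apply_eq_of_mem_body (hμ : IsAtomCong Alg μ)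
    (hU : IsMinimalSet Alg μ U) {a b c : A} (ha : a ∈ U) (hb : b ∈ U) (hab : μ a b)
    (hne : a ≠ b) (hc : c ∈ Body μ U) :
    ∃ s ∈ PolPermFun Alg U, s a = c ∨ s b = c := by
  obtain ⟨N, hN, hcN⟩ := hc
  obtain ⟨u, huN, huc⟩ := hN.exists_ne c
  obtain ⟨hu, huc'⟩ := (hN.mem_iff hμ.1.1 hcN).1 huN
  exact hU.exists_polPermFun_apply_eq hμ ha hb hab hne hu (hN.subset hcN) huc' huc

theorem IsMinimalSet.exists_polPermFun_image_eq (hμ : IsAtomCong Alg μ)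
    (hU : IsMinimalSet Alg μ U) {N₁ N₂ : Set A} (hN₁ : IsTrace μ U N₁) (hN₂ : IsTrace μ U N₂) :
    ∃ p ∈ PolPermFun Alg U, p '' N₁ = N₂ := by
  obtain ⟨-, x, hx, y, hy, hxy⟩ := id hN₁
  obtain ⟨-, z, hz, -⟩ := id hN₂
  have hxy' := ((hN₁.mem_iff hμ.1.1 hy).1 hx).2
  obtain ⟨s, hs, hsz | hsz⟩ := hU.exists_polPermFun_apply_eq_of_mem_body hμ
    (hN₁.subset hx) (hN₁.subset hy) hxy' hxy ⟨N₂, hN₂, hz⟩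
  · exact ⟨s, hs, hN₁.image_eq_of_apply_mem hμ.1 hs hN₂ hx (hsz ▸ hz)⟩
  · exact ⟨s, hs, hN₁.image_eq_of_apply_mem hμ.1 hs hN₂ hy (hsz ▸ hz)⟩

end Orbits

/-- For an atom μ and a (⊥, μ)-minimal set U, the polynomial permutations of
U act transitively on traces; the action on the body has at most two orbits; and if some
polynomial permutation moves an element of a trace nontrivially within that trace, then
the action on the body is transitive. -/
theorem stmt_5 {σ : Signature} {A : Type} [Fintype A] (Alg : UAlg σ A)
    (μ : A → A → Prop) (hatom : IsAtomCong Alg μ)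
    (U : Set A) (hU : IsMinimalSet Alg μ U) :
    (∀ N₁ N₂ : Set A, IsTrace μ U N₁ → IsTrace μ U N₂ →
      ∃ p ∈ PolPermFun Alg U, p '' N₁ = N₂) ∧
    (∃ a ∈ Body μ U, ∃ b ∈ Body μ U, ∀ c ∈ Body μ U,
      (∃ p ∈ PolPermFun Alg U, p a = c) ∨ (∃ p ∈ PolPermFun Alg U, p b = c)) ∧
    ((∃ p ∈ PolPermFun Alg U, ∃ N : Set A, IsTrace μ U N ∧ Set.MapsTo p N N ∧
        ∃ x ∈ N, p x ≠ x) →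
      ∀ a ∈ Body μ U, ∀ b ∈ Body μ U, ∃ p ∈ PolPermFun Alg U, p a = b) := by
  have hE : Equivalence μ := hatom.1.1
  obtain ⟨x, hx, y, hy, hxy, hne⟩ := hU.exists_rel_ne hatom.1
  refine ⟨fun _ _ => hU.exists_polPermFun_image_eq hatom,
    ⟨x, mem_body_of_rel hE hx hy hxy hne, y, mem_body_of_rel hE hy hx (hE.symm hxy) hne.symm,
      fun c hc => ?_⟩, ?_⟩
  · obtain ⟨s, hs, h | h⟩ := hU.exists_polPermFun_apply_eq_of_mem_body hatom hx hy hxy hne hc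
    exacts [.inl ⟨s, hs, h⟩, .inr ⟨s, hs, h⟩]
  · rintro ⟨p, hp, N, hN, hpN, z, hz, hpz⟩
    have hzU := hN.subset hz
    refine exists_polPermFun_of_forall_apply_eq hzU fun c hc => ?_
    obtain ⟨s, hs, h | h⟩ := hU.exists_polPermFun_apply_eq_of_mem_body hatom hzU
      (hN.subset (hpN hz)) ((hN.mem_iff hE (hpN hz)).1 hz).2 hpz.symm hc
    exacts [⟨s, hs, h⟩, ⟨s ∘ p, comp_mem_polPermFun hs hp, h⟩]
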